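/- Let n m : ℕ, let K : Matrix (Fin n ⊕ Fin m) (Fin n ⊕ Fin m) ℝ be symmetric and positive definite, and let u : Fin n ⊕ Fin m → ℝ. Let K₁₁ : Matrix (Fin n) (Fin n) ℝ be the principal submatrix of K on the Fin n indices (K₁₁ i j = K (Sum.inl i) (Sum.inl j)) and u₁ : Fin n → ℝ the corresponding restriction of u (u₁ i = u (Sum.inl i)). Then u₁ ⬝ᵥ (K₁₁⁻¹ *ᵥ u₁) ≤ u ⬝ᵥ (K⁻¹ *ᵥ u). (Consequently, for a Gaussian-process posterior at a test point with prior variance k and covariance vector u to the conditioning points, conditioning on the additional m points never increases the posterior variance: k − u ⬝ᵥ K⁻¹ *ᵥ u ≤ k − u₁ ⬝ᵥ K₁₁⁻¹ *ᵥ u₁, i.e., σ_{t−1}^{N₂}(x) ≤ σ_{t−1}^{N₁}(x).) -/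

import Mathlib

/-!
For positive definite `K`, `u ⬝ᵥ K⁻¹ u` is the maximum of `2 (u ⬝ᵥ v) - v ⬝ᵥ K v` over all `v`,
attained at `v = K⁻¹ u`: the difference is the quadratic form of `K` at `v - K⁻¹ u`. Restricting
`v` to the range of a matrix `P` turns this into the same problem for `Pᵀ K P` and `Pᵀ u`, so its
value `(Pᵀ u) ⬝ᵥ (Pᵀ K P)⁻¹ (Pᵀ u)` can only be smaller. A principal submatrix is the case where
`P` selects coordinates.
-/

open Matrix

namespace Matrix.PosDef

variable {ι κ : Type*} [Fintype ι] [Fintype κ] [DecidableEq ι] [DecidableEq κ]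

theorem two_mul_dotProduct_sub_dotProduct_mulVec_le {K : Matrix κ κ ℝ} (hK : K.PosDef)
    (u v : κ → ℝ) : 2 * (u ⬝ᵥ v) - v ⬝ᵥ (K *ᵥ v) ≤ u ⬝ᵥ (K⁻¹ *ᵥ u) := by
  set z := K⁻¹ *ᵥ u
  have hKz : K *ᵥ z = u := by
    rw [mulVec_mulVec, mul_nonsing_inv _ ((isUnit_iff_isUnit_det K).mp hK.isUnit), one_mulVec]
  have hKt : Kᵀ = K := by simpa using hK.isHermitian.eq
  have hnonneg := hK.posSemidef.dotProduct_mulVec_nonneg (v - z)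
  have hzKv : z ⬝ᵥ (K *ᵥ v) = u ⬝ᵥ v := by
    rw [dotProduct_mulVec, ← mulVec_transpose, hKt, hKz]
  simp only [star_trivial, mulVec_sub, sub_dotProduct, dotProduct_sub, hzKv, hKz,
    dotProduct_comm v u, dotProduct_comm z u] at hnonneg
  linarith

theorem dotProduct_vecMul_inv_mulVec_le {K : Matrix κ κ ℝ} (hK : K.PosDef) (P : Matrix κ ι ℝ)
    (hS : IsUnit (Pᵀ * K * P).det) (u : κ → ℝ) :
    (u ᵥ* P) ⬝ᵥ ((Pᵀ * K * P)⁻¹ *ᵥ (u ᵥ* P)) ≤ u ⬝ᵥ (K⁻¹ *ᵥ u) := by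
  set w := (Pᵀ * K * P)⁻¹ *ᵥ (u ᵥ* P)
  have hSw : (Pᵀ * K * P) *ᵥ w = u ᵥ* P := by
    rw [mulVec_mulVec, mul_nonsing_inv _ hS, one_mulVec]
  have hlin : u ⬝ᵥ (P *ᵥ w) = (u ᵥ* P) ⬝ᵥ w := dotProduct_mulVec u P w
  have hquad : (P *ᵥ w) ⬝ᵥ (K *ᵥ (P *ᵥ w)) = (u ᵥ* P) ⬝ᵥ w := by
    rw [← hSw, dotProduct_comm, ← mulVec_mulVec, ← mulVec_mulVec, dotProduct_mulVec,
      mulVec_transpose]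
  have := hK.two_mul_dotProduct_sub_dotProduct_mulVec_le u (P *ᵥ w)
  linarith

theorem dotProduct_submatrix_inv_mulVec_le {K : Matrix κ κ ℝ} (hK : K.PosDef) {e : ι → κ}
    (he : Function.Injective e) (u : κ → ℝ) :
    (u ∘ e) ⬝ᵥ ((K.submatrix e e)⁻¹ *ᵥ (u ∘ e)) ≤ u ⬝ᵥ (K⁻¹ *ᵥ u) := by
  set P : Matrix κ ι ℝ := (1 : Matrix κ κ ℝ).submatrix id e
  have hS : Pᵀ * K * P = K.submatrix e e := by
    ext i j
    simp [P, mul_apply, one_apply]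
  have hu : u ᵥ* P = u ∘ e := by
    ext i
    simp [P, vecMul, dotProduct, one_apply]
  have hunit : IsUnit (Pᵀ * K * P).det := by
    rw [hS, ← isUnit_iff_isUnit_det]
    exact (hK.submatrix he).isUnit
  simpa only [hS, hu] using hK.dotProduct_vecMul_inv_mulVec_le P hunit u

end Matrix.PosDef

theorem stmt_10_general (n m : ℕ) (K : Matrix (Fin n ⊕ Fin m) (Fin n ⊕ Fin m) ℝ)
    (hpd : K.PosDef)
    (u : Fin n ⊕ Fin m → ℝ)
    (K₁₁ : Matrix (Fin n) (Fin n) ℝ)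
    (hK₁₁ : ∀ i j, K₁₁ i j = K (Sum.inl i) (Sum.inl j))
    (u₁ : Fin n → ℝ) (hu₁ : ∀ i, u₁ i = u (Sum.inl i)) :
    u₁ ⬝ᵥ (K₁₁⁻¹ *ᵥ u₁) ≤ u ⬝ᵥ (K⁻¹ *ᵥ u) := by
  obtain rfl : K₁₁ = K.submatrix Sum.inl Sum.inl := Matrix.ext hK₁₁
  obtain rfl : u₁ = u ∘ Sum.inl := funext hu₁
  exact hpd.dotProduct_submatrix_inv_mulVec_le Sum.inl_injective u

theorem stmt_10 (n m : ℕ) (K : Matrix (Fin n ⊕ Fin m) (Fin n ⊕ Fin m) ℝ)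
    (hsymm : K.IsSymm) (hpd : K.PosDef)
    (u : Fin n ⊕ Fin m → ℝ)
    (K₁₁ : Matrix (Fin n) (Fin n) ℝ)
    (hK₁₁ : ∀ i j, K₁₁ i j = K (Sum.inl i) (Sum.inl j))
    (u₁ : Fin n → ℝ) (hu₁ : ∀ i, u₁ i = u (Sum.inl i)) :
    u₁ ⬝ᵥ (K₁₁⁻¹ *ᵥ u₁) ≤ u ⬝ᵥ (K⁻¹ *ᵥ u) :=
  stmt_10_general n m K hpd u K₁₁ hK₁₁ u₁ hu₁
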